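/- Suppose there is no continuous map α : Ω → (U₄ × U₂) ∖ {(0,0)} satisfying, for all (ξ₁,ξ₂,ξ₃,ξ₄) ∈ Ω, both α(ξ₂,ξ₃,ξ₄,ξ₁) = ω·α(ξ₁,ξ₂,ξ₃,ξ₄) and α(ξ₄,ξ₃,ξ₂,ξ₁) = j·α(ξ₁,ξ₂,ξ₃,ξ₄), where ω·((x₁,x₂,x₃,x₄),(y₁,y₂)) = ((x₂,x₃,x₄,x₁),(y₂,y₁)) and j·((x₁,x₂,x₃,x₄),(y₁,y₂)) = ((x₃,x₂,x₁,x₄),(y₂,y₁)). Then for every injective continuous map f : S² → ℝ³ there exist four pairwise distinct points ξ₁, ξ₂, ξ₃, ξ₄ ∈ S² such that d(f(ξ₁),f(ξ₂)) = d(f(ξ₂),f(ξ₃)) = d(f(ξ₃),f(ξ₄)) = d(f(ξ₄),f(ξ₁)) and d(f(ξ₁),f(ξ₃)) = d(f(ξ₂),f(ξ₄)). -/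

import Mathlib

/- The test map sends `(ξ₁, ξ₂, ξ₃, ξ₄)` to the deviations of the four side lengths of the
quadrilateral `f ξ₁ f ξ₂ f ξ₃ f ξ₄` from their mean, together with the difference of its two
diagonals. It is continuous, lands in `U₄ × U₂`, and is `D₈`-equivariant because `ω` and `j` permute
the sides and diagonals of the quadrilateral exactly as they permute coordinates. So by hypothesis
it vanishes somewhere on `Ω`, i.e. the quadrilateral has equal sides and equal diagonals there; on
`Ω` the diagonals cannot have length zero, hence neither can the sides, and injectivity of `f`
makes the four points distinct. -/

noncomputable section TetrahedraSetup

/-- The unit sphere `S² ⊆ ℝ³`. -/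
abbrev Sph : Type := (Metric.sphere (0 : EuclideanSpace ℝ (Fin 3)) 1)

/-- `X = S² × S² × S² × S²`. -/
abbrev Conf : Type := Sph × Sph × Sph × Sph

/-- `Ω = X \ Y` where `Y = {(x,y,x,y) : x,y ∈ S²}`. -/
def OmegaSet : Set Conf := {p | ¬ (p.1 = p.2.2.1 ∧ p.2.1 = p.2.2.2)}

/-- The ambient space `ℝ⁴ × ℝ²` containing `U₄ × U₂`. -/
abbrev V : Type := WithLp 2 (EuclideanSpace ℝ (Fin 4) × EuclideanSpace ℝ (Fin 2))

/-- Membership of `v` in `U₄ × U₂`, i.e. both groups of coordinates sum to zero. -/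
def memU (v : V) : Prop :=
  v.fst 0 + v.fst 1 + v.fst 2 + v.fst 3 = 0 ∧ v.snd 0 + v.snd 1 = 0

/-- The action of the rotation `ω ∈ D₈` on `U₄ × U₂`:
`ω·((x₁,x₂,x₃,x₄),(y₁,y₂)) = ((x₂,x₃,x₄,x₁),(y₂,y₁))`. -/
def omegaV (v : V) : V :=
  WithLp.toLp 2 ((WithLp.equiv 2 _).symm ![v.fst 1, v.fst 2, v.fst 3, v.fst 0],
   (WithLp.equiv 2 _).symm ![v.snd 1, v.snd 0])

/-- The action of the reflection `j ∈ D₈` on `U₄ × U₂`: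
`j·((x₁,x₂,x₃,x₄),(y₁,y₂)) = ((x₃,x₂,x₁,x₄),(y₂,y₁))`. -/
def jV (v : V) : V :=
  WithLp.toLp 2 ((WithLp.equiv 2 _).symm ![v.fst 2, v.fst 1, v.fst 0, v.fst 3],
   (WithLp.equiv 2 _).symm ![v.snd 1, v.snd 0])

/-- The arguments are the sides `a, b, c, d` of a quadrilateral in cyclic order and its
diagonals `e, g`. -/
def squareDefect (a b c d e g : ℝ) : V :=
  WithLp.toLp 2 ((WithLp.equiv 2 _).symm
      ![a - (a + b + c + d) / 4, b - (a + b + c + d) / 4,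
        c - (a + b + c + d) / 4, d - (a + b + c + d) / 4],
    (WithLp.equiv 2 _).symm ![e - g, g - e])

section squareDefect

variable (a b c d e g : ℝ)

lemma memU_squareDefect : memU (squareDefect a b c d e g) :=
  ⟨show a - (a + b + c + d) / 4 + (b - (a + b + c + d) / 4) + (c - (a + b + c + d) / 4)
      + (d - (a + b + c + d) / 4) = 0 by ring, show e - g + (g - e) = 0 by ring⟩

lemma squareDefect_eq_zero_iff :
    squareDefect a b c d e g = 0 ↔ a = b ∧ b = c ∧ c = d ∧ e = g := by
  simp only [squareDefect, WithLp.equiv_symm_apply, WithLp.ext_iff, WithLp.ofLp_zero, Prod.ext_iff,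
    Prod.fst_zero, Prod.snd_zero, Matrix.cons_eq_zero_iff, Matrix.zero_empty, and_true]
  constructor
  · rintro ⟨⟨h₁, h₂, h₃, -⟩, h₅, -⟩
    refine ⟨?_, ?_, ?_, ?_⟩ <;> linarith
  · rintro ⟨rfl, rfl, rfl, rfl⟩
    refine ⟨⟨?_, ?_, ?_, ?_⟩, ?_, ?_⟩ <;> ring

lemma omegaV_squareDefect : omegaV (squareDefect a b c d e g) = squareDefect b c d a g e := by
  rw [squareDefect, squareDefect, show b + c + d + a = a + b + c + d by ring]; rfl

lemma jV_squareDefect : jV (squareDefect a b c d e g) = squareDefect c b a d g e := by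
  rw [squareDefect, squareDefect, show c + b + a + d = a + b + c + d by ring]; rfl

end squareDefect

lemma Continuous.squareDefect {X : Type*} [TopologicalSpace X] {a b c d e g : X → ℝ}
    (ha : Continuous a) (hb : Continuous b) (hc : Continuous c) (hd : Continuous d)
    (he : Continuous e) (hg : Continuous g) :
    Continuous fun x => squareDefect (a x) (b x) (c x) (d x) (e x) (g x) := by
  refine (WithLp.prod_continuous_toLp 2 _ _).comp (.prodMk ?_ ?_) <;>
  · refine (PiLp.continuous_toLp 2 _).comp (continuous_pi fun i => ?_)
    fin_cases i <;> dsimp <;> fun_prop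

lemma pairwise_ne_of_equal_sides_of_equal_diagonals {E : Type*} [MetricSpace E]
    {x₁ x₂ x₃ x₄ : E} (h₁₂ : dist x₁ x₂ = dist x₂ x₃) (h₂₃ : dist x₂ x₃ = dist x₃ x₄)
    (h₃₄ : dist x₃ x₄ = dist x₄ x₁) (hdiag : dist x₁ x₃ = dist x₂ x₄)
    (hne : ¬ (x₁ = x₃ ∧ x₂ = x₄)) :
    x₁ ≠ x₂ ∧ x₁ ≠ x₃ ∧ x₁ ≠ x₄ ∧ x₂ ≠ x₃ ∧ x₂ ≠ x₄ ∧ x₃ ≠ x₄ := by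
  have hdiag_ne : dist x₁ x₃ ≠ 0 := fun h₀ =>
    hne ⟨dist_eq_zero.1 h₀, dist_eq_zero.1 (hdiag ▸ h₀)⟩
  have hside_ne : dist x₁ x₂ ≠ 0 := fun h₀ =>
    hdiag_ne (le_antisymm (by linarith [dist_triangle x₁ x₂ x₃]) dist_nonneg)
  refine ⟨dist_ne_zero.1 hside_ne, dist_ne_zero.1 hdiag_ne,
    (dist_ne_zero.1 (h₃₄ ▸ h₂₃ ▸ h₁₂ ▸ hside_ne)).symm, dist_ne_zero.1 (h₁₂ ▸ hside_ne),
    dist_ne_zero.1 (hdiag ▸ hdiag_ne), dist_ne_zero.1 (h₂₃ ▸ h₁₂ ▸ hside_ne)⟩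

section squareTestMap

variable {α E : Type*} [PseudoMetricSpace E] (f : α → E)

def squareTestMap (p : α × α × α × α) : V :=
  squareDefect (dist (f p.1) (f p.2.1)) (dist (f p.2.1) (f p.2.2.1))
    (dist (f p.2.2.1) (f p.2.2.2)) (dist (f p.2.2.2) (f p.1))
    (dist (f p.1) (f p.2.2.1)) (dist (f p.2.1) (f p.2.2.2))

lemma continuous_squareTestMap [TopologicalSpace α] (hf : Continuous f) :
    Continuous (squareTestMap f) :=
  Continuous.squareDefect (by fun_prop) (by fun_prop) (by fun_prop) (by fun_prop) (by fun_prop)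
    (by fun_prop)

variable (ξ₁ ξ₂ ξ₃ ξ₄ : α)

lemma squareTestMap_rotate :
    squareTestMap f (ξ₂, ξ₃, ξ₄, ξ₁) = omegaV (squareTestMap f (ξ₁, ξ₂, ξ₃, ξ₄)) := by
  simp only [squareTestMap, omegaV_squareDefect, dist_comm]

lemma squareTestMap_reflect :
    squareTestMap f (ξ₄, ξ₃, ξ₂, ξ₁) = jV (squareTestMap f (ξ₁, ξ₂, ξ₃, ξ₄)) := by
  simp only [squareTestMap, jV_squareDefect, dist_comm]

end squareTestMap

/-- **Proposition 2.1 of Blagojević–Ziegler.** If there is no `D₈`-equivariant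
continuous map `Ω → (U₄ × U₂) \ {(0,0)}`, then for every injective continuous
`f : S² → ℝ³` there are four pairwise distinct points on `S²` whose images span a
tetrahedron with the symmetries of a square. -/
theorem testmap_implies_tetrahedra
    (hyp : ¬ ∃ α : Conf → V,
        ContinuousOn α OmegaSet ∧
        (∀ p ∈ OmegaSet, memU (α p) ∧ α p ≠ 0) ∧
        (∀ ξ₁ ξ₂ ξ₃ ξ₄ : Sph, (ξ₁, ξ₂, ξ₃, ξ₄) ∈ OmegaSet →
          α (ξ₂, ξ₃, ξ₄, ξ₁) = omegaV (α (ξ₁, ξ₂, ξ₃, ξ₄)) ∧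
          α (ξ₄, ξ₃, ξ₂, ξ₁) = jV (α (ξ₁, ξ₂, ξ₃, ξ₄))))
    (f : Sph → EuclideanSpace ℝ (Fin 3))
    (hf_cont : Continuous f) (hf_inj : Function.Injective f) :
    ∃ ξ₁ ξ₂ ξ₃ ξ₄ : Sph,
      ξ₁ ≠ ξ₂ ∧ ξ₁ ≠ ξ₃ ∧ ξ₁ ≠ ξ₄ ∧ ξ₂ ≠ ξ₃ ∧ ξ₂ ≠ ξ₄ ∧ ξ₃ ≠ ξ₄ ∧
      dist (f ξ₁) (f ξ₂) = dist (f ξ₂) (f ξ₃) ∧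
      dist (f ξ₂) (f ξ₃) = dist (f ξ₃) (f ξ₄) ∧
      dist (f ξ₃) (f ξ₄) = dist (f ξ₄) (f ξ₁) ∧
      dist (f ξ₁) (f ξ₃) = dist (f ξ₂) (f ξ₄) := by
  by_contra! h
  refine hyp ⟨squareTestMap f, (continuous_squareTestMap f hf_cont).continuousOn,
    fun p hp => ⟨memU_squareDefect .., ?_⟩,
    fun ξ₁ ξ₂ ξ₃ ξ₄ _ => ⟨squareTestMap_rotate .., squareTestMap_reflect ..⟩⟩
  obtain ⟨ξ₁, ξ₂, ξ₃, ξ₄⟩ := p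
  intro h₀
  obtain ⟨h₁₂, h₂₃, h₃₄, hdiag⟩ := (squareDefect_eq_zero_iff ..).1 h₀
  have hΩ : ¬ (f ξ₁ = f ξ₃ ∧ f ξ₂ = f ξ₄) := fun ⟨h₁₃, h₂₄⟩ => hp ⟨hf_inj h₁₃, hf_inj h₂₄⟩
  obtain ⟨n₁₂, n₁₃, n₁₄, n₂₃, n₂₄, n₃₄⟩ :=
    pairwise_ne_of_equal_sides_of_equal_diagonals h₁₂ h₂₃ h₃₄ hdiag hΩ
  exact h ξ₁ ξ₂ ξ₃ ξ₄ (ne_of_apply_ne f n₁₂) (ne_of_apply_ne f n₁₃) (ne_of_apply_ne f n₁₄)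
    (ne_of_apply_ne f n₂₃) (ne_of_apply_ne f n₂₄) (ne_of_apply_ne f n₃₄) h₁₂ h₂₃ h₃₄ hdiag

end TetrahedraSetup
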